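/- arXiv:1704.03491 — 6 statements merged into one kernel-verified Lean document; each statement's English description precedes it below -/
import Mathlib

section
/- Let ω be a non-principal ultrafilter on ℕ and Γ a group. Suppose that for every natural number n and every subset S of the free group F_n on n generators, there is a finite subset S_0 ⊆ S with V_Γ(S_0) = V_Γ(S). Then for any finitely generated group G and any sequence of homomorphisms (φ_i : G → Γ), the homomorphism φ_i factors through the quotient map φ_∞ : G → G/ker^ω(φ_i) for an ω-large set of indices i (i.e., ω-almost surely ker^ω(φ_i) ⊆ ker φ_i). -/
universe u v

def omegaKernel {G : Type u} [Group G] (ω : Ultrafilter ℕ) {Γ : ℕ → Type v}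
    [∀ i, Group (Γ i)] (φ : ∀ i, G →* Γ i) : Subgroup G where
  carrier := {g | {i | φ i g = 1} ∈ ω}
  one_mem' := by
    simp only [Set.mem_setOf_eq, map_one]
    exact Filter.univ_mem' fun i => trivial
  mul_mem' := by
    intro a b ha hb
    simp only [Set.mem_setOf_eq] at *
    filter_upwards [ha, hb] with i h1 h2
    simp [map_mul, h1, h2]
  inv_mem' := by
    intro a ha
    simp only [Set.mem_setOf_eq] at *
    filter_upwards [ha] with i h1
    simp [h1]

instance omegaKernel_normal {G : Type u} [Group G] (ω : Ultrafilter ℕ) {Γ : ℕ → Type v}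
    [∀ i, Group (Γ i)] (φ : ∀ i, G →* Γ i) : (omegaKernel ω φ).Normal := by
  constructor
  intro a ha g
  simp only [omegaKernel, Subgroup.mem_mk, Set.mem_setOf_eq] at *
  filter_upwards [ha] with i h1
  simp [map_mul, h1]

def VFam {ι : Type v} (Γ : ι → Type u) [∀ i, Group (Γ i)] {n : ℕ}
    (S : Set (FreeGroup (Fin n))) : Set (Σ i, Fin n → Γ i) :=
  {p | ∀ W ∈ S, FreeGroup.lift p.2 W = 1}

def EqNoethFam {ι : Type v} (Γ : ι → Type u) [∀ i, Group (Γ i)] : Prop :=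
  ∀ (n : ℕ) (S : Set (FreeGroup (Fin n))),
    ∃ S₀ : Set (FreeGroup (Fin n)), S₀ ⊆ S ∧ S₀.Finite ∧ VFam Γ S₀ = VFam Γ S

/-- Coefficient-free algebraic set over a single group. -/
def VOne (Γ : Type u) [Group Γ] {n : ℕ} (S : Set (FreeGroup (Fin n))) : Set (Fin n → Γ) :=
  {g | ∀ W ∈ S, FreeGroup.lift g W = 1}

/-!
Present `G` as a quotient of a free group `F_n` by `π`. Equational noetherianity gives a finite
`S₀` inside the relations `π⁻¹(ker^ω φ)` with the same solution set. Each word of `S₀` is killed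
by `φ i ∘ π` for ω-almost every `i`, so, `S₀` being finite, all of them are simultaneously. For
such `i` the tuple `(φ i (π xⱼ))ⱼ` solves `S₀`, hence every relation of `G ⧸ ker^ω φ`; that is,
`ker^ω φ ≤ ker (φ i)`.
-/

theorem Group.FG.exists_surjective_freeGroup_fin (G : Type*) [Group G] [Group.FG G] :
    ∃ (n : ℕ) (π : FreeGroup (Fin n) →* G), Function.Surjective π := by
  obtain ⟨α, _, π, hπ⟩ := Group.fg_iff_exists_freeGroup_hom_surjective_finite.mp ‹Group.FG G›
  obtain ⟨n, ⟨e⟩⟩ := Finite.exists_equiv_fin α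
  exact ⟨n, π.comp (FreeGroup.freeGroupCongr e).symm.toMonoidHom,
    hπ.comp (FreeGroup.freeGroupCongr e).symm.surjective⟩

theorem comp_of_mem_VOne_iff {Γ : Type*} [Group Γ] {n : ℕ} (f : FreeGroup (Fin n) →* Γ)
    (S : Set (FreeGroup (Fin n))) : f ∘ FreeGroup.of ∈ VOne Γ S ↔ ∀ W ∈ S, f W = 1 := by
  have hlift : FreeGroup.lift (f ∘ FreeGroup.of) = f := FreeGroup.lift.apply_symm_apply f
  simp only [VOne, Set.mem_ofPred_eq, hlift]

theorem le_ker_of_VOne_eq {G Γ : Type*} [Group G] [Group Γ] {n : ℕ}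
    {π : FreeGroup (Fin n) →* G} (hπ : Function.Surjective π) {K : Subgroup G}
    {S₀ : Set (FreeGroup (Fin n))} (hV : VOne Γ S₀ = VOne Γ (π ⁻¹' K)) {ψ : G →* Γ}
    (hψ : ∀ W ∈ S₀, ψ (π W) = 1) : K ≤ ψ.ker := by
  have hmem : (ψ.comp π) ∘ FreeGroup.of ∈ VOne Γ (π ⁻¹' K) :=
    hV ▸ (comp_of_mem_VOne_iff _ _).mpr hψ
  intro g hg
  obtain ⟨W, rfl⟩ := hπ g
  exact (comp_of_mem_VOne_iff _ _).mp hmem W hg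

theorem statement2_general {Γ : Type u} [Group Γ] (ω : Ultrafilter ℕ)
    (hEN : ∀ (n : ℕ) (S : Set (FreeGroup (Fin n))),
      ∃ S₀ : Set (FreeGroup (Fin n)), S₀ ⊆ S ∧ S₀.Finite ∧ VOne Γ S₀ = VOne Γ S)
    (G : Type u) [Group G] [Group.FG G] (φ : ∀ _ : ℕ, G →* Γ) :
    {i : ℕ | ∃ ψ : (G ⧸ omegaKernel ω φ) →* Γ,
        ψ.comp (QuotientGroup.mk' (omegaKernel ω φ)) = φ i} ∈ ω := by
  obtain ⟨n, π, hπ⟩ := Group.FG.exists_surjective_freeGroup_fin G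
  obtain ⟨S₀, hS₀S, hS₀fin, hV⟩ := hEN n (π ⁻¹' omegaKernel ω φ)
  have hkill : ∀ᶠ i in (ω : Filter ℕ), ∀ W ∈ S₀, φ i (π W) = 1 :=
    (Filter.eventually_all_finite hS₀fin).mpr fun W hW => hS₀S hW
  filter_upwards [hkill] with i hi
  exact ⟨QuotientGroup.lift _ (φ i) (le_ker_of_VOne_eq hπ hV hi), rfl⟩

theorem statement2 {Γ : Type u} [Group Γ] (ω : Ultrafilter ℕ)
    (hω : ∀ s : Set ℕ, s.Finite → s ∉ ω)
    (hEN : ∀ (n : ℕ) (S : Set (FreeGroup (Fin n))),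
      ∃ S₀ : Set (FreeGroup (Fin n)), S₀ ⊆ S ∧ S₀.Finite ∧ VOne Γ S₀ = VOne Γ S)
    (G : Type u) [Group G] [Group.FG G] (φ : ∀ _ : ℕ, G →* Γ) :
    {i : ℕ | ∃ ψ : (G ⧸ omegaKernel ω φ) →* Γ,
        ψ.comp (QuotientGroup.mk' (omegaKernel ω φ)) = φ i} ∈ ω :=
  statement2_general ω hEN G φ
end

section
/- Let ω be a non-principal ultrafilter and 𝒢 an equationally noetherian family of groups. Suppose (α_j : L_j → L_{j+1})_{j≥1} is a sequence of surjective group homomorphisms, where each L_j is a 𝒢-limit group. Then α_j is an isomorphism for all but finitely many j. -/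
/-!
Fix a surjection `π₀ : F_n → L₀` and push it along the chain, `π_{j+1} = α_j ∘ π_j`. The
kernels `ker π_j` form an increasing chain of systems of equations; by equational noetherianity
their union `S` has the same variety as a finite subsystem `S₀`, which already lies in some
`ker π_N`. Since `L_j` is an ω-limit of groups of `𝒢`, a tuple of `L_j` satisfying the finite
system `S₀` satisfies it in ω-almost every coordinate, hence satisfies `S` there, hence in `L_j`.
So `ker π_j = S` for `j ≥ N`, and then `α_j` is injective.
-/
universe u v

/-- `L` is a `𝒢`-limit group for the family `Γ : ι → Type u`. -/
def IsGLimitGroup (ω : Ultrafilter ℕ) {ι : Type v} (Γ : ι → Type u) [∀ i, Group (Γ i)]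
    (L : Type u) [Group L] : Prop :=
  ∃ (G : Type u) (_ : Group G) (_ : Group.FG G) (f : ℕ → ι) (φ : ∀ i, G →* Γ (f i)),
    Nonempty ((G ⧸ omegaKernel ω φ) ≃* L)

open Function

lemma sigma_mk_mem_VFam_iff {ι : Type v} {Γ : ι → Type u} [∀ i, Group (Γ i)] {n : ℕ}
    {S : Set (FreeGroup (Fin n))} (i : ι) (ρ : FreeGroup (Fin n) →* Γ i) :
    (⟨i, FreeGroup.lift.symm ρ⟩ : Σ i, Fin n → Γ i) ∈ VFam Γ S ↔ S ⊆ ρ.ker := by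
  simp only [VFam, Set.mem_ofPred_eq, Equiv.apply_symm_apply, Set.subset_def,
    MonoidHom.mem_ker, SetLike.mem_coe]

lemma MonoidHom.injective_of_ker_comp_le {F A B : Type*} [Group F] [Group A] [Group B]
    {π : F →* A} (hπ : Surjective π) (α : A →* B) (h : (α.comp π).ker ≤ π.ker) :
    Injective α := by
  rw [injective_iff_map_eq_one]
  intro a ha
  obtain ⟨w, rfl⟩ := hπ a
  exact h ha

namespace IsGLimitGroup

variable {ω : Ultrafilter ℕ} {ι : Type v} {Γ : ι → Type u} [∀ i, Group (Γ i)]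
  {L : Type u} [Group L]

lemma exists_freeGroup_surjective (hL : IsGLimitGroup ω Γ L) :
    ∃ (n : ℕ) (π : FreeGroup (Fin n) →* L), Surjective π := by
  obtain ⟨G, _, _, f, φ, ⟨e⟩⟩ := hL
  have : Group.FG L := Group.fg_of_surjective (f := e.toMonoidHom.comp (QuotientGroup.mk' _))
    (e.surjective.comp (QuotientGroup.mk'_surjective _))
  obtain ⟨α, _, π, hπ⟩ := Group.fg_iff_exists_freeGroup_hom_surjective_finite.mp this
  obtain ⟨n, ⟨e'⟩⟩ := Finite.exists_equiv_fin α
  exact ⟨n, π.comp (FreeGroup.freeGroupCongr e').symm.toMonoidHom,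
    hπ.comp (FreeGroup.freeGroupCongr e').symm.surjective⟩

lemma subset_ker_of_VFam_eq (hL : IsGLimitGroup ω Γ L) {n : ℕ}
    {S₀ S : Set (FreeGroup (Fin n))} (hfin : S₀.Finite) (hV : VFam Γ S₀ = VFam Γ S)
    {π : FreeGroup (Fin n) →* L} (h₀ : S₀ ⊆ π.ker) : S ⊆ π.ker := by
  obtain ⟨G, _, _, f, φ, ⟨e⟩⟩ := hL
  set q := e.toMonoidHom.comp (QuotientGroup.mk' (omegaKernel ω φ))
  obtain ⟨ψ, rfl⟩ : ∃ ψ : FreeGroup (Fin n) →* G, q.comp ψ = π := by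
    choose g hg using fun k => (e.surjective.comp (QuotientGroup.mk'_surjective _)) (π (.of k))
    exact ⟨FreeGroup.lift g, by ext k; simpa [q] using hg k⟩
  have mem_ker_iff : ∀ w, w ∈ (q.comp ψ).ker ↔ {i | (φ i).comp ψ w = 1} ∈ ω := by
    intro w
    rw [MonoidHom.mem_ker, MonoidHom.comp_apply, MonoidHom.comp_apply, MulEquiv.coe_toMonoidHom,
      MulEquiv.map_eq_one_iff, QuotientGroup.mk'_apply, QuotientGroup.eq_one_iff]
    rfl
  have hlarge : {i | S₀ ⊆ ((φ i).comp ψ).ker} ∈ ω := by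
    filter_upwards [(Filter.biInter_mem hfin).mpr fun w hw => (mem_ker_iff w).mp (h₀ hw)]
      with i hi w hw
    exact Set.mem_iInter₂.mp hi w hw
  intro w hw
  refine (mem_ker_iff w).mpr (Filter.mem_of_superset hlarge fun i hi => ?_)
  rw [Set.mem_ofPred_eq, ← sigma_mk_mem_VFam_iff (f i), hV, sigma_mk_mem_VFam_iff] at hi
  exact hi hw

end IsGLimitGroup

section Chain

variable {F : Type*} [Group F] {L : ℕ → Type*} [∀ j, Group (L j)]
  (α : ∀ j, L j →* L (j + 1)) (π₀ : F →* L 0)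

def chainComp : ∀ j, F →* L j
  | 0 => π₀
  | j + 1 => (α j).comp (chainComp j)

lemma surjective_chainComp (hα : ∀ j, Surjective (α j)) (hπ₀ : Surjective π₀) (j : ℕ) :
    Surjective (chainComp α π₀ j) := by
  induction j with
  | zero => exact hπ₀
  | succ j ih => exact (hα j).comp ih

lemma monotone_ker_chainComp : Monotone fun j => ((chainComp α π₀ j).ker : Set F) :=
  monotone_nat_of_le_succ fun j w (hw : chainComp α π₀ j w = 1) =>
    show α j (chainComp α π₀ j w) = 1 by rw [hw, map_one]

end Chain

theorem statement6_general {ι : Type v} (Γ : ι → Type u) [∀ i, Group (Γ i)]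
    (ω : Ultrafilter ℕ)
    (hEN : EqNoethFam Γ)
    (L : ℕ → Type u) [∀ j, Group (L j)]
    (hL : ∀ j, IsGLimitGroup ω Γ (L j))
    (α : ∀ j, L j →* L (j + 1)) (hsurj : ∀ j, Function.Surjective (α j)) :
    ∃ N : ℕ, ∀ j ≥ N, Function.Bijective (α j) := by
  obtain ⟨n, π₀, hπ₀⟩ := (hL 0).exists_freeGroup_surjective
  set π := chainComp α π₀
  have hmono := monotone_ker_chainComp α π₀
  obtain ⟨S₀, hS₀, hfin, hV⟩ := hEN n (⋃ j, ((π j).ker : Set _))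
  obtain ⟨N, hN⟩ : ∃ N, S₀ ⊆ (π N).ker := by
    simpa only [hfin.coe_toFinset] using
      hmono.directed_le.exists_mem_subset_of_finset_subset_biUnion (s := hfin.toFinset)
        (by simpa only [hfin.coe_toFinset] using hS₀)
  refine ⟨N, fun j hj => ⟨?_, hsurj j⟩⟩
  have hstable : ⋃ k, ((π k).ker : Set (FreeGroup (Fin n))) ⊆ (π j).ker :=
    (hL j).subset_ker_of_VFam_eq hfin hV (hN.trans (hmono hj))
  exact MonoidHom.injective_of_ker_comp_le (surjective_chainComp α π₀ hsurj hπ₀ j) (α j)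
    ((Set.subset_iUnion _ (j + 1)).trans hstable)

theorem statement6 {ι : Type v} (Γ : ι → Type u) [∀ i, Group (Γ i)]
    (ω : Ultrafilter ℕ) (hω : ∀ s : Set ℕ, s.Finite → s ∉ ω)
    (hEN : EqNoethFam Γ)
    (L : ℕ → Type u) [∀ j, Group (L j)]
    (hL : ∀ j, IsGLimitGroup ω Γ (L j))
    (α : ∀ j, L j →* L (j + 1)) (hsurj : ∀ j, Function.Surjective (α j)) :
    ∃ N : ℕ, ∀ j ≥ N, Function.Bijective (α j) :=
  statement6_general Γ ω hEN L hL α hsurj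
end

section
/- Let ω be a non-principal ultrafilter and 𝒢 an equationally noetherian family of groups. Then every 𝒢-limit group L = G/ker^ω(φ_i) is fully residually 𝒢: for every finite subset F ⊆ L \ {1} there exists Γ ∈ 𝒢 and a homomorphism η : L → Γ with η(f) ≠ 1 for all f ∈ F. -/
universe u v

/-!
Write `G` as a quotient of a free group `F_n` and let `S ⊆ F_n` be the preimage of `ker^ω φ`.
Equational noetherianity gives a finite `S₀ ⊆ S` with the same solutions in every member of the
family. Each relator in `S₀` is killed by `φ i` for `ω`-almost every `i`, and since `S₀` is
finite, for `ω`-almost every `i` the tuple of images of the generators under `φ i` solves `S₀`,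
hence all of `S`; that is, `φ i` factors through the limit group. A nontrivial element of the
limit group survives under `φ i` for `ω`-almost every `i`, so finitely many of them survive
simultaneously under one such factored map.
-/

theorem Group.FG.exists_freeGroup_fin_surjective {G : Type*} [Group G] [Group.FG G] :
    ∃ (n : ℕ) (π : FreeGroup (Fin n) →* G), Function.Surjective π := by
  obtain ⟨S, hS, π, hπ⟩ := Group.fg_iff_exists_freeGroup_hom_surjective.mp ‹Group.FG G›
  obtain ⟨n, ⟨e⟩⟩ := hS.exists_equiv_fin S
  exact ⟨n, π.comp (FreeGroup.freeGroupCongr e).symm.toMonoidHom,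
    hπ.comp (FreeGroup.freeGroupCongr e).symm.surjective⟩

section LimitGroup

variable {G : Type*} [Group G] {ω : Ultrafilter ℕ}

theorem mem_omegaKernel_iff {Γ : ℕ → Type*} [∀ i, Group (Γ i)] {φ : ∀ i, G →* Γ i} {g : G} :
    g ∈ omegaKernel ω φ ↔ ∀ᶠ i in ω, φ i g = 1 :=
  Iff.rfl

theorem notMem_omegaKernel_iff {Γ : ℕ → Type*} [∀ i, Group (Γ i)] {φ : ∀ i, G →* Γ i} {g : G} :
    g ∉ omegaKernel ω φ ↔ ∀ᶠ i in ω, φ i g ≠ 1 := by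
  rw [mem_omegaKernel_iff, Ultrafilter.eventually_not]

theorem mk_mem_VFam_iff {ι : Type*} {Γ : ι → Type*} [∀ i, Group (Γ i)] {n : ℕ} {k : ι}
    (π : FreeGroup (Fin n) →* G) (ψ : G →* Γ k) {S : Set (FreeGroup (Fin n))} :
    (⟨k, ψ ∘ π ∘ FreeGroup.of⟩ : Σ i, Fin n → Γ i) ∈ VFam Γ S ↔ ∀ W ∈ S, ψ (π W) = 1 := by
  have hlift : FreeGroup.lift (ψ ∘ π ∘ FreeGroup.of) = ψ.comp π :=
    FreeGroup.lift.apply_symm_apply (ψ.comp π)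
  simp only [VFam, Set.mem_ofPred_eq, hlift, MonoidHom.comp_apply]

theorem EqNoethFam.eventually_omegaKernel_le_ker {ι : Type*} {Γ : ι → Type*}
    [∀ i, Group (Γ i)] (hEN : EqNoethFam Γ) [Group.FG G] {f : ℕ → ι} (φ : ∀ i, G →* Γ (f i)) :
    ∀ᶠ i in ω, omegaKernel ω φ ≤ (φ i).ker := by
  obtain ⟨n, π, hπ⟩ := Group.FG.exists_freeGroup_fin_surjective (G := G)
  obtain ⟨S₀, hS₀S, hS₀, hV⟩ := hEN n {W | π W ∈ omegaKernel ω φ}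
  have hsolves : ∀ᶠ i in ω, ∀ W ∈ S₀, φ i (π W) = 1 :=
    hS₀.eventually_all.mpr fun W hW => hS₀S hW
  filter_upwards [hsolves] with i hi g hg
  obtain ⟨W, rfl⟩ := hπ g
  have hpt := (mk_mem_VFam_iff π (φ i)).mpr hi
  rw [hV, mk_mem_VFam_iff] at hpt
  exact hpt W hg

theorem eventually_lift_ne_one {Γ : ℕ → Type*} [∀ i, Group (Γ i)] {φ : ∀ i, G →* Γ i}
    {x : G ⧸ omegaKernel ω φ} (hx : x ≠ 1) :
    ∀ᶠ i in ω, ∀ h : omegaKernel ω φ ≤ (φ i).ker, QuotientGroup.lift _ (φ i) h x ≠ 1 := by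
  obtain ⟨g, rfl⟩ := QuotientGroup.mk_surjective x
  have hg : g ∉ omegaKernel ω φ := fun hg => hx ((QuotientGroup.eq_one_iff g).mpr hg)
  filter_upwards [notMem_omegaKernel_iff.mp hg] with i hi h
  rwa [QuotientGroup.lift_mk]

end LimitGroup

theorem statement9_general {ι : Type v} {Γ : ι → Type u} [∀ i, Group (Γ i)]
    (ω : Ultrafilter ℕ)
    (hEN : EqNoethFam Γ)
    {G : Type u} [Group G] [Group.FG G] {f : ℕ → ι} (φ : ∀ i, G →* Γ (f i))
    (F : Set (G ⧸ omegaKernel ω φ)) (hF : F.Finite)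
    (h1 : (1 : G ⧸ omegaKernel ω φ) ∉ F) :
    ∃ (k : ι) (η : (G ⧸ omegaKernel ω φ) →* Γ k), ∀ x ∈ F, η x ≠ 1 := by
  have hsep : ∀ᶠ i in ω, ∀ x ∈ F, ∀ h : omegaKernel ω φ ≤ (φ i).ker,
      QuotientGroup.lift _ (φ i) h x ≠ 1 :=
    hF.eventually_all.mpr fun x hx => eventually_lift_ne_one (ne_of_mem_of_not_mem hx h1)
  obtain ⟨i, hker, hi⟩ := (hEN.eventually_omegaKernel_le_ker φ |>.and hsep).exists
  exact ⟨f i, QuotientGroup.lift _ (φ i) hker, fun x hx => hi x hx hker⟩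

theorem statement9 {ι : Type v} {Γ : ι → Type u} [∀ i, Group (Γ i)]
    (ω : Ultrafilter ℕ) (hω : ∀ s : Set ℕ, s.Finite → s ∉ ω)
    (hEN : EqNoethFam Γ)
    {G : Type u} [Group G] [Group.FG G] {f : ℕ → ι} (φ : ∀ i, G →* Γ (f i))
    (F : Set (G ⧸ omegaKernel ω φ)) (hF : F.Finite)
    (h1 : (1 : G ⧸ omegaKernel ω φ) ∉ F) :
    ∃ (k : ι) (η : (G ⧸ omegaKernel ω φ) →* Γ k), ∀ x ∈ F, η x ≠ 1 :=
  statement9_general ω hEN φ F hF h1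
end

section
/- Suppose a group Γ acts by isometries with bounded orbits on a δ-hyperbolic geodesic metric space X, and let ε > 0. Then there exists a point x ∈ X such that d(x, g·x) ≤ 4δ + 2ε for every g ∈ Γ. -/
/-!
Take a point `x` that is almost a Chebyshev centre of an orbit `Y`: `Y ⊆ B(x, ρ)` with `ρ` within
`ε` of the least radius of a closed ball containing `Y`. Every `g • x` is such a centre too. For two
such centres `c₁, c₂` at distance `d`, slimness of the triangles `c₁ c₂ y` shows that the midpoint
of a geodesic `[c₁, c₂]` is within `ρ + 2δ - d/2` of each `y ∈ Y`; minimality of `ρ` up to `ε`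
then forces `d ≤ 4δ + 2ε`.
-/

universe u v

/-- `f` parametrizes a geodesic from `x` to `y` (by arc length on `[0, dist x y]`). -/
def IsGeodesicParam {X : Type u} [MetricSpace X] (x y : X) (f : ℝ → X) : Prop :=
  f 0 = x ∧ f (dist x y) = y ∧
    ∀ s ∈ Set.Icc (0 : ℝ) (dist x y), ∀ t ∈ Set.Icc (0 : ℝ) (dist x y),
      dist (f s) (f t) = |s - t|

/-- A geodesic metric space: every pair of points is joined by a geodesic. -/
def GeodesicSpace (X : Type u) [MetricSpace X] : Prop :=
  ∀ x y : X, ∃ f : ℝ → X, IsGeodesicParam x y f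

/-- `δ`-hyperbolicity via slim triangles: every side of a geodesic triangle lies in the
closed `δ`-neighborhood of the union of the other two sides. -/
def SlimTriangles (X : Type u) [MetricSpace X] (δ : ℝ) : Prop :=
  ∀ (x y z : X) (f g h : ℝ → X), IsGeodesicParam x y f → IsGeodesicParam y z g →
    IsGeodesicParam x z h → ∀ t ∈ Set.Icc (0 : ℝ) (dist x y),
      Metric.infDist (f t) (g '' Set.Icc 0 (dist y z) ∪ h '' Set.Icc 0 (dist x z)) ≤ δ

open Metric Set

namespace IsGeodesicParam

variable {X : Type u} [MetricSpace X] {x y : X} {f : ℝ → X}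

theorem dist_left (hf : IsGeodesicParam x y f) {t : ℝ} (ht : t ∈ Icc 0 (dist x y)) :
    dist x (f t) = t := by
  have h := hf.2.2 0 ⟨le_rfl, dist_nonneg⟩ t ht
  rw [hf.1] at h
  rw [h, zero_sub, abs_neg, abs_of_nonneg ht.1]

theorem dist_right (hf : IsGeodesicParam x y f) {t : ℝ} (ht : t ∈ Icc 0 (dist x y)) :
    dist (f t) y = dist x y - t := by
  have h := hf.2.2 t ht (dist x y) ⟨dist_nonneg, le_rfl⟩
  rw [hf.2.1] at h
  rw [h, abs_of_nonpos (by linarith [ht.2])]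
  ring

theorem dist_add_dist_of_mem_image (hf : IsGeodesicParam x y f) {p : X}
    (hp : p ∈ f '' Icc 0 (dist x y)) : dist x p + dist p y = dist x y := by
  obtain ⟨t, ht, rfl⟩ := hp
  rw [hf.dist_left ht, hf.dist_right ht]
  ring

theorem isCompact_image (hf : IsGeodesicParam x y f) : IsCompact (f '' Icc 0 (dist x y)) := by
  refine isCompact_Icc.image_of_continuousOn (LipschitzOnWith.continuousOn (K := 1) ?_)
  refine LipschitzOnWith.of_dist_le_mul fun s hs t ht => ?_
  rw [hf.2.2 s hs t ht, NNReal.coe_one, one_mul, Real.dist_eq]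

theorem dist_add_dist_le_of_mem_image (hf : IsGeodesicParam x y f) {p : X}
    (hp : p ∈ f '' Icc 0 (dist x y)) (m : X) :
    dist m y + dist x m ≤ 2 * dist m p + dist x y := by
  have := hf.dist_add_dist_of_mem_image hp
  linarith [dist_triangle m p y, dist_triangle x p m, dist_comm p m]

end IsGeodesicParam

namespace SlimTriangles

variable {X : Type u} [MetricSpace X] {δ : ℝ}

theorem dist_midpoint_add_le (hslim : SlimTriangles X δ) (hgeo : GeodesicSpace X)
    {c₁ c₂ : X} {f : ℝ → X} (hf : IsGeodesicParam c₁ c₂ f) (y : X) :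
    dist (f (dist c₁ c₂ / 2)) y + dist c₁ c₂ / 2 ≤ max (dist c₁ y) (dist c₂ y) + 2 * δ := by
  obtain ⟨g, hg⟩ := hgeo c₂ y
  obtain ⟨h, hh⟩ := hgeo c₁ y
  set d := dist c₁ c₂
  set m := f (d / 2)
  have hmid : d / 2 ∈ Icc 0 d := ⟨by positivity, by linarith [dist_nonneg (x := c₁) (y := c₂)]⟩
  have hc₁m : dist c₁ m = d / 2 := hf.dist_left hmid
  have hc₂m : dist c₂ m = d / 2 := by rw [dist_comm, hf.dist_right hmid]; ring
  set S := g '' Icc 0 (dist c₂ y) ∪ h '' Icc 0 (dist c₁ y)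
  have hSne : S.Nonempty := ⟨g 0, Or.inl ⟨0, ⟨le_rfl, dist_nonneg⟩, rfl⟩⟩
  obtain ⟨p, hpS, hp⟩ :=
    (hg.isCompact_image.union hh.isCompact_image).exists_infDist_eq_dist hSne m
  have hmp : dist m p ≤ δ := hp ▸ hslim c₁ c₂ y f g h hf hg hh (d / 2) hmid
  rcases hpS with hpg | hph
  · linarith [hg.dist_add_dist_le_of_mem_image hpg m, le_max_right (dist c₁ y) (dist c₂ y)]
  · linarith [hh.dist_add_dist_le_of_mem_image hph m, le_max_left (dist c₁ y) (dist c₂ y)]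

theorem dist_le_of_subset_closedBall (hslim : SlimTriangles X δ) (hgeo : GeodesicSpace X)
    {Y : Set X} {ρ ε : ℝ} (hmin : ∀ z ρ', Y ⊆ closedBall z ρ' → ρ ≤ ρ' + ε)
    {c₁ c₂ : X} (h₁ : Y ⊆ closedBall c₁ ρ) (h₂ : Y ⊆ closedBall c₂ ρ) :
    dist c₁ c₂ ≤ 4 * δ + 2 * ε := by
  obtain ⟨f, hf⟩ := hgeo c₁ c₂
  have hball : Y ⊆ closedBall (f (dist c₁ c₂ / 2)) (ρ + 2 * δ - dist c₁ c₂ / 2) := by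
    intro y hy
    have hy₁ : dist c₁ y ≤ ρ := by rw [dist_comm]; exact h₁ hy
    have hy₂ : dist c₂ y ≤ ρ := by rw [dist_comm]; exact h₂ hy
    rw [mem_closedBall, dist_comm]
    linarith [hslim.dist_midpoint_add_le hgeo hf y, max_le hy₁ hy₂]
  linarith [hmin _ _ hball]

end SlimTriangles

theorem Bornology.IsBounded.exists_subset_closedBall_forall_le_add {X : Type u}
    [MetricSpace X] {Y : Set X} (hY : Bornology.IsBounded Y) (hne : Y.Nonempty) {ε : ℝ}
    (hε : 0 < ε) :
    ∃ x ρ, Y ⊆ closedBall x ρ ∧ ∀ z ρ', Y ⊆ closedBall z ρ' → ρ ≤ ρ' + ε := by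
  set radii := {ρ | ∃ z, Y ⊆ closedBall z ρ}
  obtain ⟨y, hy⟩ := hne
  have hradii : radii.Nonempty :=
    let ⟨r, hr⟩ := hY.subset_closedBall y
    ⟨r, y, hr⟩
  have hbdd : BddBelow radii := ⟨0, fun _ ⟨_, hz⟩ => dist_nonneg.trans (hz hy)⟩
  obtain ⟨ρ, ⟨x, hx⟩, hρ⟩ := exists_lt_of_csInf_lt hradii (lt_add_of_pos_right (sInf radii) hε)
  exact ⟨x, ρ, hx, fun z ρ' h => by linarith [csInf_le hbdd ⟨z, h⟩]⟩

theorem statement12_general {X : Type u} [MetricSpace X] [Nonempty X]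
    {Γ : Type v} [Group Γ] [MulAction Γ X]
    (hiso : ∀ g : Γ, Isometry fun x : X => g • x)
    (δ : ℝ) (hgeo : GeodesicSpace X) (hslim : SlimTriangles X δ)
    (hbdd : ∀ x : X, Bornology.IsBounded (Set.range fun g : Γ => g • x))
    (ε : ℝ) (hε : 0 < ε) :
    ∃ x : X, ∀ g : Γ, dist x (g • x) ≤ 4 * δ + 2 * ε := by
  have : IsIsometricSMul Γ X := ⟨hiso⟩
  obtain ⟨x₀⟩ := ‹Nonempty X›
  have horbit : Bornology.IsBounded (MulAction.orbit Γ x₀) := hbdd x₀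
  obtain ⟨x, ρ, hx, hmin⟩ :=
    horbit.exists_subset_closedBall_forall_le_add (Set.range_nonempty _) hε
  refine ⟨x, fun g => hslim.dist_le_of_subset_closedBall hgeo hmin hx ?_⟩
  have hgx := Set.smul_set_mono (a := g) hx
  rwa [MulAction.smul_orbit, Metric.smul_closedBall] at hgx

theorem statement12 {X : Type u} [MetricSpace X] [Nonempty X]
    {Γ : Type v} [Group Γ] [MulAction Γ X]
    (hiso : ∀ g : Γ, Isometry fun x : X => g • x)
    (δ : ℝ) (hδ : 0 ≤ δ) (hgeo : GeodesicSpace X) (hslim : SlimTriangles X δ)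
    (hbdd : ∀ x : X, Bornology.IsBounded (Set.range fun g : Γ => g • x))
    (ε : ℝ) (hε : 0 < ε) :
    ∃ x : X, ∀ g : Γ, dist x (g • x) ≤ 4 * δ + 2 * ε :=
  statement12_general hiso δ hgeo hslim hbdd ε hε
end

section
/- Let ω be a non-principal ultrafilter, 𝒢 a family of groups, G a finitely generated group, and (φ_i) a sequence of homomorphisms from G to members of 𝒢 with limit group L = G/ker^ω(φ_i) and limit map φ_∞. Suppose L is finitely presented relative to subgroups {P_1,...,P_n}, and suppose for each j there is a subgroup P̃_j ≤ G with φ_∞(P̃_j) = P_j such that ω-almost surely ker(φ_∞|_{P̃_j}) ⊆ ker(φ_i|_{P̃_j}). Then ω-almost surely ker(φ_∞) ⊆ ker(φ_i), i.e., φ_i factors through φ_∞ ω-almost surely. -/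
universe u v

/-- The family consisting of the free group on `S` together with the subgroups `P j`. -/
def relFam {L : Type u} [Group L] (S : Finset L) {n : ℕ} (P : Fin n → Subgroup L) :
    Unit ⊕ Fin n → Type u :=
  Sum.elim (fun _ => FreeGroup ↥S) (fun j => ↥(P j))

instance relFamGroup {L : Type u} [Group L] (S : Finset L) {n : ℕ} (P : Fin n → Subgroup L) :
    ∀ j, Group (relFam S P j) := fun j =>
  match j with
  | .inl _ => inferInstanceAs (Group (FreeGroup ↥S))
  | .inr j => inferInstanceAs (Group ↥(P j))

/-- The natural homomorphism `F(S) ∗ P₁ ∗ ⋯ ∗ Pₙ →* L` which is the identity on `S`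
and on each `P j`. -/
def relMap {L : Type u} [Group L] (S : Finset L) {n : ℕ} (P : Fin n → Subgroup L) :
    Monoid.CoprodI (relFam S P) →* L :=
  Monoid.CoprodI.lift fun j =>
    match j with
    | .inl _ => FreeGroup.lift (fun s : ↥S => (s : L))
    | .inr j => (P j).subtype

/-- `L` is finitely presented relative to the subgroups `P j`: for some finite `S ⊆ L` the
natural map `F(S) ∗ P₁ ∗ ⋯ ∗ Pₙ →* L` is surjective with kernel normally generated by a
finite set. -/
def RelFinitelyPresented {L : Type u} [Group L] {n : ℕ} (P : Fin n → Subgroup L) : Prop :=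
  ∃ S : Finset L, Function.Surjective (relMap S P) ∧
    ∃ R : Finset (Monoid.CoprodI (relFam S P)),
      (relMap S P).ker = Subgroup.normalClosure (R : Set (Monoid.CoprodI (relFam S P)))

/-!
Let `N₀` be the normal closure in `G` of the subgroups `P̃ⱼ ∩ ker φ_∞`. In `G / N₀` each `P̃ⱼ`
becomes a copy of `Pⱼ`, so the relative presentation `F(S) ∗ P₁ ∗ ⋯ ∗ Pₙ → L` lifts through
`G / N₀ → L`. Since `G / N₀` is finitely generated, the kernel of `G / N₀ → L` is then normally
generated by finitely many elements: the images of the finitely many relators, and for each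
generator `t` the element `t⁻¹ χ(w(t))`, where `χ(w(t))` is a lift of the image of `t` through
the presentation. Hence `ker φ_∞` is the normal closure of a finite set `F` together with the
`P̃ⱼ ∩ ker φ_∞`. Almost surely `φᵢ` kills the finitely many elements of `F` and, by hypothesis,
every `P̃ⱼ ∩ ker φ_∞`, hence all of `ker φ_∞`.
-/

open Subgroup

theorem exists_finset_ker_eq_normalClosure_of_comp_eq {C H Q : Type*} [Group C] [Group H]
    [Group Q] [Group.FG H] {ρ : C →* Q} (hρ : Function.Surjective ρ) {R : Finset C}
    (hR : ρ.ker = normalClosure (R : Set C)) {χ : C →* H} {μ : H →* Q}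
    (hμχ : μ.comp χ = ρ) : ∃ E : Finset H, μ.ker = normalClosure (E : Set H) := by
  classical
  obtain ⟨T, hT⟩ := Group.FG.out (G := H)
  set w := Function.surjInv hρ
  set E := R.image χ ∪ T.image fun t => t⁻¹ * χ (w (μ t))
  have hμ : ∀ c, μ (χ c) = ρ c := fun c => DFunLike.congr_fun hμχ c
  refine ⟨E, le_antisymm ?_ (normalClosure_le_normal ?_)⟩
  · set π := QuotientGroup.mk' (normalClosure (E : Set H))
    have hπE : ∀ x ∈ E, π x = 1 := fun x hx =>
      (QuotientGroup.eq_one_iff x).mpr (subset_normalClosure hx)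
    have hker : ρ.ker ≤ (π.comp χ).ker := hR ▸ normalClosure_le_normal fun r hr =>
      hπE _ (Finset.mem_union_left _ (Finset.mem_image_of_mem χ hr))
    set η := ρ.liftOfSurjective hρ ⟨π.comp χ, hker⟩
    -- `t` and `χ (w (μ t))` agree modulo `E`, and `η` is computed on the latter
    have hημ : η.comp μ = π := by
      refine MonoidHom.eq_of_eqOn_dense hT fun t ht => ?_
      have hw : ρ (w (μ t)) = μ t := Function.surjInv_eq hρ _
      have ht' := hπE _ (Finset.mem_union_right _ (Finset.mem_image_of_mem _ ht))
      rw [map_mul, map_inv, inv_mul_eq_one] at ht'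
      simp only [MonoidHom.comp_apply]
      rw [← hw, MonoidHom.liftOfRightInverse_comp_apply, ht']
      rfl
    intro h hh
    rw [← QuotientGroup.eq_one_iff]
    change π h = 1
    rw [← hημ, MonoidHom.comp_apply, MonoidHom.mem_ker.mp hh, map_one]
  · intro x hx
    rcases Finset.mem_union.mp hx with hx | hx
    · obtain ⟨r, hr, rfl⟩ := Finset.mem_image.mp hx
      rw [SetLike.mem_coe, MonoidHom.mem_ker, hμ, ← MonoidHom.mem_ker, hR]
      exact subset_normalClosure hr
    · obtain ⟨t, -, rfl⟩ := Finset.mem_image.mp hx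
      rw [SetLike.mem_coe, MonoidHom.mem_ker, map_mul, map_inv, hμ, Function.surjInv_eq hρ,
        inv_mul_cancel]

theorem exists_comp_eq_relMap {L H : Type*} [Group L] [Group H] (S : Finset L) {n : ℕ}
    {P : Fin n → Subgroup L} {μ : H →* L} (hμ : Function.Surjective μ)
    (ψ : ∀ j, P j →* H) (hψ : ∀ j, μ.comp (ψ j) = (P j).subtype) :
    ∃ χ : Monoid.CoprodI (relFam S P) →* H, μ.comp χ = relMap S P := by
  refine ⟨Monoid.CoprodI.lift fun j => match j with
    | .inl _ => FreeGroup.lift fun s : S => Function.surjInv hμ s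
    | .inr j => ψ j, Monoid.CoprodI.ext_hom _ _ ?_⟩
  rintro (⟨⟩ | j)
  · refine FreeGroup.ext_hom _ _ fun s => ?_
    change μ (Monoid.CoprodI.lift _ (Monoid.CoprodI.of (M := relFam S P) (i := .inl ())
      (FreeGroup.of s))) = relMap S P (Monoid.CoprodI.of (M := relFam S P) (i := .inl ()) (.of s))
    erw [relMap, Monoid.CoprodI.lift_of, Monoid.CoprodI.lift_of, FreeGroup.lift_apply_of,
      FreeGroup.lift_apply_of, Function.surjInv_eq hμ]
  · exact hψ j

theorem exists_comp_eq_subtype_map {G L H : Type*} [Group G] [Group L] [Group H]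
    {φ : G →* L} {π : G →* H} {μ : H →* L} (hμπ : μ.comp π = φ) {K : Subgroup G}
    (hK : ∀ x ∈ K, φ x = 1 → π x = 1) :
    ∃ ψ : K.map φ →* H, μ.comp ψ = (K.map φ).subtype := by
  have hker : (φ.subgroupMap K).ker ≤ (π.comp K.subtype).ker := fun x hx =>
    hK x x.2 (congrArg Subtype.val hx)
  refine ⟨(φ.subgroupMap K).liftOfSurjective (φ.subgroupMap_surjective K) ⟨_, hker⟩, ?_⟩
  ext ⟨_, x, hx, rfl⟩
  change μ ((φ.subgroupMap K).liftOfSurjective _ _ (φ.subgroupMap K ⟨x, hx⟩)) = φ x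
  rw [MonoidHom.liftOfRightInverse_comp_apply]
  exact DFunLike.congr_fun hμπ x

theorem exists_finset_ker_eq_normalClosure {G L : Type*} [Group G] [Group.FG G] [Group L]
    {φ : G →* L} (hφ : Function.Surjective φ) {n : ℕ} {Pt : Fin n → Subgroup G}
    (hfp : RelFinitelyPresented fun j => (Pt j).map φ) :
    ∃ F : Finset G,
      φ.ker = normalClosure ((F : Set G) ∪ ⋃ j, (Pt j : Set G) ∩ φ.ker) := by
  classical
  obtain ⟨S, hS, R, hR⟩ := hfp
  set N₀ := normalClosure (⋃ j, (Pt j : Set G) ∩ φ.ker)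
  set π := QuotientGroup.mk' N₀
  have hN₀ : N₀ ≤ φ.ker :=
    normalClosure_le_normal (Set.iUnion_subset fun _ => Set.inter_subset_right)
  set μ := QuotientGroup.lift N₀ φ hN₀
  have hμπ : μ.comp π = φ := MonoidHom.ext fun _ => rfl
  have hψ : ∀ j, ∃ ψ : (Pt j).map φ →* G ⧸ N₀, μ.comp ψ = ((Pt j).map φ).subtype :=
    fun j => exists_comp_eq_subtype_map hμπ fun x hx hxφ => (QuotientGroup.eq_one_iff x).mpr
      (subset_normalClosure (Set.mem_iUnion.mpr ⟨j, hx, hxφ⟩))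
  choose ψ hψ using hψ
  have hμ : Function.Surjective μ := QuotientGroup.lift_surjective_of_surjective _ _ hφ _
  obtain ⟨χ, hχ⟩ := exists_comp_eq_relMap S hμ ψ hψ
  obtain ⟨E, hE⟩ := exists_finset_ker_eq_normalClosure_of_comp_eq hS hR hχ
  obtain ⟨F, rfl⟩ : ∃ F : Finset G, F.image π = E :=
    ⟨E.image Quotient.out, by simp [Finset.image_image, Function.comp_def, π]⟩
  refine ⟨F, ?_⟩
  calc φ.ker = μ.ker.comap π := by rw [MonoidHom.comap_ker, hμπ]
    _ = ((normalClosure (F : Set G)).map π).comap π := by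
      rw [hE, map_normalClosure _ _ (QuotientGroup.mk'_surjective N₀), Finset.coe_image]
    _ = normalClosure (F : Set G) ⊔ N₀ := by rw [comap_map_eq, QuotientGroup.ker_mk']
    _ = _ := (normalClosure_union _ _).symm

theorem statement14_general {ι : Type v} {Γ : ι → Type u} [∀ i, Group (Γ i)]
    (ω : Ultrafilter ℕ)
    {G : Type u} [Group G] [Group.FG G] {f : ℕ → ι} (φ : ∀ i, G →* Γ (f i))
    {n : ℕ} (P : Fin n → Subgroup (G ⧸ omegaKernel ω φ))
    (hfp : RelFinitelyPresented P)
    (Pt : Fin n → Subgroup G)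
    (hPt : ∀ j, (Pt j).map (QuotientGroup.mk' (omegaKernel ω φ)) = P j)
    (hfac : ∀ j, {i : ℕ | ∀ g ∈ Pt j,
      QuotientGroup.mk' (omegaKernel ω φ) g = 1 → φ i g = 1} ∈ ω) :
    {i : ℕ | ∀ g : G, QuotientGroup.mk' (omegaKernel ω φ) g = 1 → φ i g = 1} ∈ ω := by
  obtain rfl : P = fun j => (Pt j).map (QuotientGroup.mk' (omegaKernel ω φ)) :=
    funext fun j => (hPt j).symm
  obtain ⟨F, hF⟩ := exists_finset_ker_eq_normalClosure (QuotientGroup.mk'_surjective _) hfp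
  have hFω : ∀ x ∈ F, {i | φ i x = 1} ∈ ω := fun x hx => by
    have hx : x ∈ (QuotientGroup.mk' (omegaKernel ω φ)).ker :=
      hF ▸ subset_normalClosure (Or.inl hx)
    rwa [QuotientGroup.ker_mk'] at hx
  filter_upwards [Filter.iInter_mem.mpr hfac, (Filter.biInter_finset_mem F).mpr hFω]
    with i hPi hFi g hg
  have hle : (QuotientGroup.mk' (omegaKernel ω φ)).ker ≤ (φ i).ker := hF ▸
    normalClosure_le_normal (Set.union_subset (fun x hx => Set.mem_iInter₂.mp hFi x hx)
      (Set.iUnion_subset fun j x hx => Set.mem_iInter.mp hPi j x hx.1 hx.2))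
  exact hle hg

theorem statement14 {ι : Type v} {Γ : ι → Type u} [∀ i, Group (Γ i)]
    (ω : Ultrafilter ℕ) (hω : ∀ s : Set ℕ, s.Finite → s ∉ ω)
    {G : Type u} [Group G] [Group.FG G] {f : ℕ → ι} (φ : ∀ i, G →* Γ (f i))
    {n : ℕ} (P : Fin n → Subgroup (G ⧸ omegaKernel ω φ))
    (hfp : RelFinitelyPresented P)
    (Pt : Fin n → Subgroup G)
    (hPt : ∀ j, (Pt j).map (QuotientGroup.mk' (omegaKernel ω φ)) = P j)
    (hfac : ∀ j, {i : ℕ | ∀ g ∈ Pt j,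
      QuotientGroup.mk' (omegaKernel ω φ) g = 1 → φ i g = 1} ∈ ω) :
    {i : ℕ | ∀ g : G, QuotientGroup.mk' (omegaKernel ω φ) g = 1 → φ i g = 1} ∈ ω :=
  statement14_general ω φ P hfp Pt hPt hfac
end

section
/- Let G be a group such that there is a constant N with the property that every element of G has at most N distinct conjugates in G (G is an N-BFC group). Then the commutator subgroup G' of G is finite, with order bounded by a constant depending only on N. -/
universe u

/-!
Choose `x` whose conjugacy class `x^G` has the maximal size `n ≤ N`, and conjugators `t c` with
`t c * x * (t c)⁻¹ = c` for `c ∈ x^G`. If `y` commutes with every `t c`, then `c ↦ c * y` maps `x^G`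
injectively into `(x * y)^G`, hence onto it by maximality; so `g * x * y * g⁻¹ = c * y` for some
`c ∈ x^G`, i.e. `⁅y, g⁆ = c⁻¹ * (g * x * g⁻¹) ∈ (x^G)⁻¹ * x^G`. The common centralizer `D` of the
`t c` has index at most `N ^ n`, and `⁅u * y, g⁆ = u * ⁅y, g⁆ * (g * u * g⁻¹)⁻¹`, so running `u`
over coset representatives of `D` shows that there are at most `N ^ N * N ^ 3` commutators.
Schur's theorem `Subgroup.card_commutator_le_of_finite_commutatorSet` then bounds `|G'|`.
-/

open scoped Pointwise commutatorElement

section BFC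

open Subgroup

variable {G : Type*} [Group G]

lemma setOf_conj_eq_conjugatesOf (g : G) :
    {x : G | ∃ h : G, h⁻¹ * g * h = x} = conjugatesOf g := by
  ext x
  simp only [Set.mem_ofPred_eq, conjugatesOf, isConj_iff]
  exact ⟨fun ⟨h, hx⟩ => ⟨h⁻¹, by simpa using hx⟩, fun ⟨c, hx⟩ => ⟨c⁻¹, by simpa using hx⟩⟩

lemma Subgroup.index_centralizer_singleton (g : G) :
    (centralizer {g}).index = (conjugatesOf g).ncard := by
  have horbit : MulAction.orbit (ConjAct G) g = conjugatesOf g := by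
    ext x
    rw [ConjAct.mem_orbit_conjAct, isConj_comm]
    rfl
  rw [← horbit, ← MulAction.index_stabilizer, ConjAct.stabilizer_eq_centralizer]
  rfl

lemma Subgroup.index_iInf_le_pow {ι : Type*} [Finite ι] (f : ι → Subgroup G) {n : ℕ}
    (h : ∀ i, (f i).index ≤ n) : (⨅ i, f i).index ≤ n ^ Nat.card ι := by
  cases nonempty_fintype ι
  calc (⨅ i, f i).index ≤ ∏ i, (f i).index := index_iInf_le f
    _ ≤ n ^ Nat.card ι := by
      rw [Nat.card_eq_fintype_card, ← Finset.card_univ]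
      exact Finset.prod_le_pow_card _ _ n fun i _ => h i

lemma commutatorElement_mul_left_eq_smul (u y g : G) :
    ⁅u * y, g⁆ = u • (⁅y, g⁆ * (g * u * g⁻¹)⁻¹) := by
  simp only [smul_eq_mul, commutatorElement_def]
  group

lemma commutatorSet_subset_iUnion (H : Subgroup G) (S : Set G)
    (hS : ∀ y ∈ H, ∀ g, ⁅y, g⁆ ∈ S) :
    commutatorSet G ⊆ ⋃ q : G ⧸ H, q.out • (S * (conjugatesOf q.out)⁻¹) := by
  rintro _ ⟨a, g, rfl⟩
  obtain ⟨h, hu⟩ := QuotientGroup.mk_out_eq_mul H a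
  have ha : ⁅a, g⁆ = (a : G ⧸ H).out • (⁅(h : G)⁻¹, g⁆ * (g * (a : G ⧸ H).out * g⁻¹)⁻¹) := by
    rw [← commutatorElement_mul_left_eq_smul, hu, mul_inv_cancel_right]
  refine Set.mem_iUnion.mpr ⟨a, ha ▸ ?_⟩
  refine Set.smul_mem_smul_set (Set.mul_mem_mul (hS _ (inv_mem h.2) g) (Set.inv_mem_inv.mpr ?_))
  exact isConj_iff.mpr ⟨g, rfl⟩

lemma commutatorSet_finite_and_ncard_le (H : Subgroup G) [H.FiniteIndex] {S : Set G}
    (hSfin : S.Finite) (hS : ∀ y ∈ H, ∀ g, ⁅y, g⁆ ∈ S) {N : ℕ}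
    (hfin : ∀ g : G, (conjugatesOf g).Finite) (hN : ∀ g : G, (conjugatesOf g).ncard ≤ N) :
    (commutatorSet G).Finite ∧ (commutatorSet G).ncard ≤ H.index * (S.ncard * N) := by
  have hsub := commutatorSet_subset_iUnion H S hS
  cases nonempty_fintype (G ⧸ H)
  have hcard (u : G) : (u • (S * (conjugatesOf u)⁻¹)).ncard ≤ S.ncard * N := by
    rw [Set.ncard_smul_set, ← Nat.card_coe_set_eq]
    refine Set.natCard_mul_le.trans ?_
    rw [Set.natCard_inv, Nat.card_coe_set_eq, Nat.card_coe_set_eq]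
    exact Nat.mul_le_mul_left _ (hN u)
  have hfinU := Set.finite_iUnion fun q : G ⧸ H =>
    (hSfin.mul (hfin q.out).inv).smul_set (a := q.out)
  refine ⟨hfinU.subset hsub, ?_⟩
  calc (commutatorSet G).ncard
      ≤ (⋃ q : G ⧸ H, q.out • (S * (conjugatesOf q.out)⁻¹)).ncard := Set.ncard_le_ncard hsub hfinU
    _ ≤ ∑ q : G ⧸ H, (q.out • (S * (conjugatesOf q.out)⁻¹)).ncard :=
        Set.ncard_iUnion_le_of_fintype _
    _ ≤ ∑ _q : G ⧸ H, S.ncard * N := Finset.sum_le_sum fun q _ => hcard q.out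
    _ = H.index * (S.ncard * N) := by simp [index, Nat.card_eq_fintype_card]

lemma commutatorElement_mem_of_forall_ncard_conjugatesOf_le {x : G}
    (hfin : ∀ g : G, (conjugatesOf g).Finite)
    (hmax : ∀ g : G, (conjugatesOf g).ncard ≤ (conjugatesOf x).ncard)
    (t : conjugatesOf x → G) (ht : ∀ c, t c * x * (t c)⁻¹ = c)
    {y : G} (hy : ∀ c, Commute (t c) y) (g : G) :
    ⁅y, g⁆ ∈ (conjugatesOf x)⁻¹ * conjugatesOf x := by
  have hsub : (· * y) '' conjugatesOf x ⊆ conjugatesOf (x * y) := by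
    rintro _ ⟨c, hc, rfl⟩
    refine isConj_iff.mpr ⟨t ⟨c, hc⟩, ?_⟩
    calc t ⟨c, hc⟩ * (x * y) * (t ⟨c, hc⟩)⁻¹
        = (t ⟨c, hc⟩ * x * (t ⟨c, hc⟩)⁻¹) * (t ⟨c, hc⟩ * y * (t ⟨c, hc⟩)⁻¹) := by group
      _ = c * y := by rw [ht, (hy _).eq, mul_inv_cancel_right]
  have heq : (· * y) '' conjugatesOf x = conjugatesOf (x * y) :=
    Set.eq_of_subset_of_ncard_le hsub
      ((Set.ncard_image_of_injective _ (mul_left_injective y)).symm ▸ hmax _) (hfin _)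
  obtain ⟨c, hc, hcg⟩ : g * (x * y) * g⁻¹ ∈ (· * y) '' conjugatesOf x :=
    heq ▸ isConj_iff.mpr ⟨g, rfl⟩
  have hcomm : ⁅y, g⁆ = c⁻¹ * (g * x * g⁻¹) := by
    rw [eq_mul_inv_of_mul_eq hcg, commutatorElement_def]
    group
  exact hcomm ▸ Set.mul_mem_mul (Set.inv_mem_inv.mpr hc) (isConj_iff.mpr ⟨g, rfl⟩)

lemma Subgroup.finiteIndex_centralizer_singleton {g : G} (hg : (conjugatesOf g).Finite) :
    (centralizer {g}).FiniteIndex :=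
  ⟨(index_centralizer_singleton g).symm ▸ ((Set.ncard_pos hg).mpr ⟨g, mem_conjugatesOf_self⟩).ne'⟩

theorem commutatorSet_finite_and_ncard_le_of_ncard_conjugatesOf_le {N : ℕ}
    (hfin : ∀ g : G, (conjugatesOf g).Finite) (hN : ∀ g : G, (conjugatesOf g).ncard ≤ N) :
    (commutatorSet G).Finite ∧ (commutatorSet G).ncard ≤ N ^ N * (N * N * N) := by
  obtain ⟨x, hx⟩ : ∃ x : G, ∀ g : G, (conjugatesOf g).ncard ≤ (conjugatesOf x).ncard := by
    have hbdd : BddAbove (Set.range fun g : G => (conjugatesOf g).ncard) :=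
      ⟨N, Set.forall_mem_range.mpr hN⟩
    obtain ⟨x, hx⟩ := Nat.sSup_mem (Set.range_nonempty _) hbdd
    exact ⟨x, fun g => (le_csSup hbdd ⟨g, rfl⟩).trans_eq hx.symm⟩
  choose t ht using fun c : conjugatesOf x => isConj_iff.mp c.2
  have := (hfin x).to_subtype
  have := finiteIndex_iInf fun c => finiteIndex_centralizer_singleton (hfin (t c))
  have hS (y) (hy : y ∈ ⨅ c, centralizer {t c}) (g : G) :
      ⁅y, g⁆ ∈ (conjugatesOf x)⁻¹ * conjugatesOf x :=
    commutatorElement_mem_of_forall_ncard_conjugatesOf_le hfin hx t ht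
      (fun c => (mem_centralizer_singleton_iff.mp (mem_iInf.mp hy c)).symm) g
  have hNpos : 0 < N :=
    ((Set.ncard_pos (hfin x)).mpr ⟨x, mem_conjugatesOf_self⟩).trans_le (hN x)
  have hindex : (⨅ c, centralizer {t c}).index ≤ N ^ N := by
    refine (index_iInf_le_pow _ fun c => ?_).trans (Nat.pow_le_pow_right hNpos ?_)
    · exact (index_centralizer_singleton _).trans_le (hN _)
    · exact (Nat.card_coe_set_eq _).trans_le (hN x)
  have hScard : ((conjugatesOf x)⁻¹ * conjugatesOf x).ncard ≤ N * N := by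
    rw [← Nat.card_coe_set_eq]
    refine Set.natCard_mul_le.trans ?_
    rw [Set.natCard_inv, Nat.card_coe_set_eq]
    exact Nat.mul_le_mul (hN x) (hN x)
  obtain ⟨hfinite, hcard⟩ :=
    commutatorSet_finite_and_ncard_le _ ((hfin x).inv.mul (hfin x)) hS hfin hN
  exact ⟨hfinite, hcard.trans (Nat.mul_le_mul hindex (Nat.mul_le_mul_right _ hScard))⟩

end BFC

theorem statement17 (N : ℕ) :
    ∃ C : ℕ, ∀ (G : Type u) (_ : Group G),
      (∀ g : G, {x : G | ∃ h : G, h⁻¹ * g * h = x}.Finite ∧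
        Nat.card {x : G | ∃ h : G, h⁻¹ * g * h = x} ≤ N) →
      ((commutator G : Set G).Finite ∧ Nat.card ↥(commutator G) ≤ C) := by
  refine ⟨(Finset.range (N ^ N * (N * N * N) + 1)).sup Subgroup.cardCommutatorBound,
    fun G _ hG => ?_⟩
  simp only [setOf_conj_eq_conjugatesOf, Nat.card_coe_set_eq] at hG
  obtain ⟨hfinite, hcard⟩ := commutatorSet_finite_and_ncard_le_of_ncard_conjugatesOf_le
    (fun g => (hG g).1) (fun g => (hG g).2)
  have := hfinite.to_subtype
  have : Finite (commutator G) := inferInstance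
  refine ⟨Set.toFinite _, (Subgroup.card_commutator_le_of_finite_commutatorSet G).trans ?_⟩
  exact Finset.le_sup (Finset.mem_range_succ_iff.mpr ((Nat.card_coe_set_eq _).trans_le hcard))
end
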